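/- Let P' be a large-tree forcing notion, n < ω, and P an n-collage over P'. Suppose S, T ∈ P', s, t ∈ 2^n, S ⊆ P→(s⌢0), T ⊆ P→(t⌢1), σ ∈ 2^{<ω}, and T = σ·S. Then there is an (n+1)-collage Q over P' with Q ⊆_{n+1} P such that Q→(s⌢0) ⊆ S and Q→(t⌢1) ⊆ T. -/

import Mathlib

namespace E0L

/-- Finite binary strings `2^{<ω}`. -/
abbrev Str : Type := List Bool

/-- Sets of binary strings (in particular, trees). -/
abbrev Tr : Type := Set Str

/-- The action `s·t` of a string on a string:
`(s·t)(k) = t(k) + s(k) mod 2` for `k < min(|s|,|t|)` and `(s·t)(k) = t(k)` otherwise. -/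
def act (s t : Str) : Str := List.ofFn fun k : Fin t.length => Bool.xor (s.getD k false) (t.get k)

/-- The action `s·T` of a string on a set of strings. -/
def actT (s : Str) (T : Tr) : Tr := (act s) '' T

/-- `T ↾ s = {t ∈ T : s ⊆ t or t ⊆ s}`. -/
def restr (T : Tr) (s : Str) : Tr := {t ∈ T | s <+: t ∨ t <+: s}

/-- `[T]`, the set of infinite branches of `T` (as elements of Cantor space `2^ω`). -/
def branches (T : Tr) : Set (ℕ → Bool) := {x | ∀ n : ℕ, (List.ofFn fun k : Fin n => x k) ∈ T}

/-- `T[s] = {t : s ⊆ t or t ⊂ s}`. -/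
def Tbr (s : Str) : Tr := {t | s <+: t ∨ (t <+: s ∧ t ≠ s)}

/-- `LTwit T r q` : the strings `q i n` witness that `T` is an E0-large tree with stem `r`:
`|q^0_n| = |q^1_n| ≥ 1`, `q^i_n(0) = i`, and `T` consists of all initial segments of strings
of the form `r⌢q^{i(0)}_0⌢…⌢q^{i(n)}_n`. -/
def LTwit (T : Tr) (r : Str) (q : ℕ → Bool → Str) : Prop :=
  (∀ n : ℕ, (q n true).length = (q n false).length ∧ 1 ≤ (q n false).length) ∧
  (∀ n : ℕ, ∀ i : Bool, (q n i).head? = some i) ∧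
  T = {t | ∃ n : ℕ, ∃ f : ℕ → Bool,
        t <+: r ++ ((List.range (n+1)).map (fun k => q k (f k))).flatten}

/-- `T` is an E0-large tree (`T ∈ LT`). -/
def IsLT (T : Tr) : Prop := ∃ r q, LTwit T r q

/-- `stem T` : the longest `s ∈ T` with `T = T↾s`. -/
noncomputable def stem (T : Tr) : Str :=
  Classical.epsilon fun s => s ∈ T ∧ restr T s = T ∧ ∀ t ∈ T, restr T t = T → t.length ≤ s.length

/-- The canonical witness `(r, q)` of an E0-large tree. -/
noncomputable def witness (T : Tr) : Str × (ℕ → Bool → Str) :=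
  Classical.epsilon fun rq => LTwit T rq.1 rq.2

/-- Splitting levels computed from a witness: `spl_0 = |r|`, `spl_{n+1} = spl_n + |q^i_n|`. -/
def splN (r : Str) (q : ℕ → Bool → Str) : ℕ → ℕ
  | 0 => r.length
  | n+1 => splN r q n + (q n false).length

/-- `spl T n`, the `n`-th splitting level of an E0-large tree `T`. -/
noncomputable def spl (T : Tr) (n : ℕ) : ℕ := splN (witness T).1 (witness T).2 n

/-- Simple splitting `T→i = T↾(stem(T)⌢i)`. -/
noncomputable def split1 (T : Tr) (i : Bool) : Tr := restr T (stem T ++ [i])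

/-- Iterated splitting `T→s`: `T→Λ = T`, `T→(s⌢i) = (T→s)→i`. -/
noncomputable def splitS (T : Tr) (s : Str) : Tr := s.foldl split1 T

/-- `S ⊆_n T` : `S ⊆ T` and `spl_k(S) = spl_k(T)` for all `k < n`. -/
def subN (n : ℕ) (S T : Tr) : Prop := S ⊆ T ∧ ∀ k < n, spl S k = spl T k

/-- A large-tree forcing notion: a set of E0-large trees closed under restriction
and under the action of strings. -/
def IsLTF (P : Set Tr) : Prop :=
  (∀ T ∈ P, IsLT T) ∧
  (∀ T ∈ P, ∀ u ∈ T, restr T u ∈ P) ∧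
  (∀ T ∈ P, ∀ s : Str, actT s T ∈ P)

/-- `T` is an `n`-collage over `P`: `T ∈ LT` and `T→s ∈ P` for all `s ∈ 2^n`. -/
def IsCollage (P : Set Tr) (n : ℕ) (T : Tr) : Prop :=
  IsLT T ∧ ∀ s : Str, s.length = n → splitS T s ∈ P

/-- `D` is open dense in `P` (as a set of trees). -/
def OpenDense1 (P D : Set Tr) : Prop :=
  D ⊆ P ∧ (∀ S ∈ P, ∃ T ∈ D, T ⊆ S) ∧ (∀ S ∈ P, ∀ T ∈ D, S ⊆ T → S ∈ D)

/-- `⟨T,T'⟩` is a condition of the conditional product `P ×_{E0} P`. -/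
def CondPair (P : Set Tr) (p : Tr × Tr) : Prop :=
  p.1 ∈ P ∧ p.2 ∈ P ∧ ∃ s : Str, actT s p.1 = p.2

/-- Componentwise order on pairs of trees: `p ≤ q`. -/
def pleq (p q : Tr × Tr) : Prop := p.1 ⊆ q.1 ∧ p.2 ⊆ q.2

/-- Compatibility of two conditions in `P ×_{E0} P`. -/
def Compat (P : Set Tr) (p q : Tr × Tr) : Prop :=
  ∃ r : Tr × Tr, CondPair P r ∧ pleq r p ∧ pleq r q

/-- `D` is pre-dense in `P ×_{E0} P`. -/
def PreDense2 (P : Set Tr) (D : Set (Tr × Tr)) : Prop :=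
  ∀ p : Tr × Tr, CondPair P p → ∃ q ∈ D, Compat P p q

/-- `D` is open dense in `P ×_{E0} P`. -/
def OpenDense2 (P : Set Tr) (D : Set (Tr × Tr)) : Prop :=
  D ⊆ {p | CondPair P p} ∧
  (∀ p : Tr × Tr, CondPair P p → ∃ q ∈ D, pleq q p) ∧
  (∀ p : Tr × Tr, CondPair P p → ∀ q ∈ D, pleq p q → p ∈ D)

/-- A `P ×_{E0} P`-real name `c = ⟨C_n^i⟩`. -/
def IsRealName (P : Set Tr) (c : ℕ → Bool → Set (Tr × Tr)) : Prop :=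
  (∀ n : ℕ, ∀ i : Bool, c n i ⊆ {p | CondPair P p}) ∧
  (∀ n : ℕ, PreDense2 P (c n false ∪ c n true)) ∧
  (∀ n : ℕ, ∀ p ∈ c n false, ∀ q ∈ c n true, ¬ Compat P p q)

/-- `p` directly forces `c(n) = i`. -/
def DFVal (c : ℕ → Bool → Set (Tr × Tr)) (p : Tr × Tr) (n : ℕ) (i : Bool) : Prop :=
  ∃ q ∈ c n i, pleq p q

/-- `p` directly forces `s ⊂ c`. -/
def DFPrefix (c : ℕ → Bool → Set (Tr × Tr)) (p : Tr × Tr) (s : Str) : Prop :=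
  ∀ n < s.length, DFVal c p n (s.getD n false)

/-- `p` directly forces `c ∉ [U]`. -/
def DFAvoid (c : ℕ → Bool → Set (Tr × Tr)) (p : Tr × Tr) (U : Tr) : Prop :=
  ∃ s : Str, s ∉ U ∧ DFPrefix c p s

/-- `p` directly forces `c ≠ d`: there are incomparable strings `s, t` such that
`p` directly forces `s ⊂ c` and `t ⊂ d`. -/
def DFNe (c d : ℕ → Bool → Set (Tr × Tr)) (p : Tr × Tr) : Prop :=
  ∃ s t : Str, ¬ s <+: t ∧ ¬ t <+: s ∧ DFPrefix c p s ∧ DFPrefix d p t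

/-- The action `σ·c` of a string on a real name. -/
def actName (σ : Str) (c : ℕ → Bool → Set (Tr × Tr)) : ℕ → Bool → Set (Tr × Tr) :=
  fun n i => if σ.getD n false = true then c n (!i) else c n i

/-- The name `π_left` of the left generic real. -/
def piLeft : ℕ → Bool → Set (Tr × Tr) := fun n i =>
  {p | ∃ s t : Str, s.length = n+1 ∧ t.length = n+1 ∧ s.getD n false = i ∧ p = (Tbr s, Tbr t)}

/-- The name `π_right` of the right generic real. -/
def piRight : ℕ → Bool → Set (Tr × Tr) := fun n i =>
  {p | ∃ s t : Str, s.length = n+1 ∧ t.length = n+1 ∧ t.getD n false = i ∧ p = (Tbr s, Tbr t)}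

/-!
An E0-large tree is `largeTree r q`: its stem `r` followed, at each level `k`, by one of the two
blocks `q k false`, `q k true`. All cells `T→u` with `|u|` fixed are translates of one another under
the action, by the string that moves one cell's stem onto the other's.

Shrink `S` to `S' = S→0^|σ|`, whose stem `r` is at least as long as `σ`; then `σ·S'` is the large
tree with stem `σ·r` and the same blocks. Since `S' ⊆ P→(s⌢0)` and `σ·S' ⊆ P→(t⌢1)`, the stems
`r` and `σ·r` extend the stems of these two cells by tails of equal length. The tree `Q` keeps the
first `n` blocks of `P`, lengthens each `n`-th block `q n i` by the tail of colour `i`, and then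
continues with the blocks of `S'`. So `Q→(s⌢0) = S'` and `Q→(t⌢1) = σ·S'`, and any other cell
`Q→(v⌢i)` is the translate of one of these by the string that maps `P→(s⌢0)`, resp. `P→(t⌢1)`,
onto `P→(v⌢i)`; hence it lies in `P'` and in `P→(v⌢i)`.
-/

@[simp] lemma length_act (s t : Str) : (act s t).length = t.length := by
  simp [act]

@[simp] lemma getElem_act (s t : Str) (k : ℕ) (hk : k < (act s t).length) :
    (act s t)[k] = xor (s.getD k false) (t[k]'(by simpa using hk)) := by
  simp [act]

@[simp] lemma act_act (s t : Str) : act s (act s t) = t :=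
  List.ext_getElem (by simp) fun k _ _ => by simp

lemma act_act_cancel {c a : Str} (h : c.length = a.length) : act (act c a) a = c := by
  refine List.ext_getElem (by simp [h]) fun k hk hkc => ?_
  simp only [length_act] at hk
  rw [getElem_act, List.getD_eq_getElem _ _ (by simpa using hk), getElem_act,
    List.getD_eq_getElem _ _ hkc]
  simp

lemma act_take (s t : Str) (m : ℕ) : act s (t.take m) = (act s t).take m :=
  List.ext_getElem (by simp) fun k _ _ => by simp

lemma act_prefix (s : Str) {x y : Str} (h : x <+: y) : act s x <+: act s y := by
  rw [List.prefix_iff_eq_take.1 h, act_take]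
  exact List.take_prefix _ _

lemma act_append {s x : Str} (y : Str) (h : s.length ≤ x.length) :
    act s (x ++ y) = act s x ++ y := by
  refine List.ext_getElem (by simp) fun k hk _ => ?_
  by_cases hkx : k < x.length
  · rw [List.getElem_append_left (by simpa using hkx), getElem_act, getElem_act,
      List.getElem_append_left hkx]
  · rw [List.getElem_append_right (by simpa using not_lt.1 hkx), getElem_act,
      List.getElem_append_right (not_lt.1 hkx), List.getD_eq_default _ _ (by omega)]
    simp

lemma prefix_of_comparable {x y : Str} (h : x <+: y ∨ y <+: x) (hl : x.length ≤ y.length) :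
    x <+: y :=
  h.elim id fun h => (h.eq_of_length_le hl).symm ▸ List.prefix_refl x

lemma eq_of_append_singleton_prefix {x y : Str} {a b : Bool} (ha : x ++ [a] <+: y)
    (hb : x ++ [b] <+: y) : a = b := by
  simpa using (List.prefix_of_prefix_length_le ha hb (by simp)).eq_of_length (by simp)

lemma exists_eq_append_singleton {u : Str} {n : ℕ} (hu : u.length = n + 1) :
    ∃ v i, v.length = n ∧ u = v ++ [i] :=
  ⟨u.dropLast, u.getLast (List.ne_nil_of_length_eq_add_one hu), by simp [hu],
    (List.dropLast_append_getLast _).symm⟩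

def IsBlocks (q : ℕ → Bool → Str) : Prop :=
  (∀ n : ℕ, (q n true).length = (q n false).length ∧ 1 ≤ (q n false).length) ∧
  ∀ n : ℕ, ∀ i : Bool, (q n i).head? = some i

def blocks (q : ℕ → Bool → Str) (f : ℕ → Bool) (n : ℕ) : Str :=
  ((List.range n).map fun k => q k (f k)).flatten

def largeTree (r : Str) (q : ℕ → Bool → Str) : Tr :=
  {t | ∃ n f, t <+: r ++ blocks q f (n+1)}

def blocksAlong (q : ℕ → Bool → Str) (u : Str) : Str :=
  blocks q (fun k => u.getD k false) u.length

lemma ltwit_iff {T : Tr} {r : Str} {q : ℕ → Bool → Str} :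
    LTwit T r q ↔ IsBlocks q ∧ T = largeTree r q :=
  and_assoc.symm

lemma isLT_iff {T : Tr} : IsLT T ↔ ∃ r q, IsBlocks q ∧ T = largeTree r q := by
  simp only [IsLT, ltwit_iff]

section Blocks

variable {q : ℕ → Bool → Str}

@[simp] lemma blocks_zero (f : ℕ → Bool) : blocks q f 0 = [] := rfl

lemma blocks_succ (f : ℕ → Bool) (n : ℕ) : blocks q f (n+1) = blocks q f n ++ q n (f n) := by
  simp [blocks, List.range_succ]

lemma blocks_succ' (f : ℕ → Bool) (n : ℕ) :
    blocks q f (n+1) = q 0 (f 0) ++ blocks (fun k => q (k+1)) (fun k => f (k+1)) n := by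
  simp [blocks, List.range_succ_eq_map]
  rfl

lemma blocks_add (f : ℕ → Bool) (a b : ℕ) :
    blocks q f (a+b) = blocks q f a ++ blocks (fun k => q (k+a)) (fun k => f (k+a)) b := by
  induction b with
  | zero => simp
  | succ b ih => rw [← Nat.add_assoc, blocks_succ, ih, blocks_succ, List.append_assoc,
      Nat.add_comm b a]

lemma blocks_congr {q' : ℕ → Bool → Str} {f g : ℕ → Bool} {n : ℕ}
    (h : ∀ k < n, q k (f k) = q' k (g k)) : blocks q f n = blocks q' g n := by
  unfold blocks
  congr 1
  exact List.map_congr_left fun k hk => h k (List.mem_range.1 hk)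

lemma blocks_prefix_blocks (f : ℕ → Bool) {a b : ℕ} (h : a ≤ b) :
    blocks q f a <+: blocks q f b := by
  obtain ⟨c, rfl⟩ := Nat.exists_eq_add_of_le h
  rw [blocks_add]
  exact List.prefix_append _ _

lemma blocksAlong_cons (i : Bool) (v : Str) :
    blocksAlong q (i :: v) = q 0 i ++ blocksAlong (fun k => q (k+1)) v :=
  blocks_succ' _ _

lemma blocksAlong_append_singleton (v : Str) (i : Bool) :
    blocksAlong q (v ++ [i]) = blocksAlong q v ++ q v.length i := by
  rw [blocksAlong, List.length_append, List.length_singleton, blocks_succ, blocksAlong,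
    List.getD_append_right _ _ _ _ le_rfl, Nat.sub_self, List.getD_cons_zero]
  congr 1
  exact blocks_congr fun k hk => by rw [List.getD_append _ _ _ _ hk]

lemma blocksAlong_congr {q' : ℕ → Bool → Str} {u : Str} (h : ∀ k < u.length, q k = q' k) :
    blocksAlong q u = blocksAlong q' u :=
  blocks_congr fun k hk => by rw [h k hk]

lemma blocksAlong_ofFn (f : ℕ → Bool) (m : ℕ) :
    blocksAlong q (List.ofFn fun k : Fin m => f k) = blocks q f m := by
  rw [blocksAlong, List.length_ofFn]
  exact blocks_congr fun k hk => by
    rw [List.getD_eq_getElem _ _ (by simpa using hk), List.getElem_ofFn]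

namespace IsBlocks

variable (hq : IsBlocks q)
include hq

lemma length_eq (n : ℕ) (i : Bool) : (q n i).length = (q n false).length := by
  cases i
  · rfl
  · exact (hq.1 n).1

lemma singleton_prefix (n : ℕ) (i : Bool) : [i] <+: q n i := by
  obtain ⟨l, hl⟩ := List.head?_eq_some_iff.1 (hq.2 n i)
  exact ⟨l, hl.symm⟩

lemma shift (m : ℕ) : IsBlocks fun k => q (k + m) :=
  ⟨fun n => hq.1 (n + m), fun n => hq.2 (n + m)⟩

lemma length_append_blocks (r : Str) (f : ℕ → Bool) (n : ℕ) :
    (r ++ blocks q f n).length = splN r q n := by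
  induction n with
  | zero => simp [splN]
  | succ n ih =>
    rw [blocks_succ, ← List.append_assoc, List.length_append, ih, splN, hq.length_eq]

lemma length_append_blocksAlong (r u : Str) :
    (r ++ blocksAlong q u).length = splN r q u.length :=
  hq.length_append_blocks r _ _

lemma le_splN (r : Str) (n : ℕ) : n ≤ splN r q n := by
  induction n with
  | zero => exact Nat.zero_le _
  | succ n ih => have := (hq.1 n).2; rw [splN]; omega

end IsBlocks

end Blocks

lemma stem_eq {T : Tr} {r : Str} (hr : r ∈ T) (hroot : restr T r = T)
    (hmax : ∀ s ∈ T, restr T s = T → s <+: r) : stem T = r := by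
  have hex : ∃ s, s ∈ T ∧ restr T s = T ∧ ∀ t ∈ T, restr T t = T → t.length ≤ s.length :=
    ⟨r, hr, hroot, fun t ht h => (hmax t ht h).length_le⟩
  obtain ⟨hmem, hrestr, hlongest⟩ := Classical.epsilon_spec hex
  exact (hmax _ hmem hrestr).eq_of_length_le (hlongest r hr hroot)

lemma restr_subset (T : Tr) (s : Str) : restr T s ⊆ T := Set.sep_subset _ _

lemma splitS_cons (T : Tr) (i : Bool) (v : Str) : splitS T (i :: v) = splitS (split1 T i) v :=
  rfl

lemma splitS_subset (T : Tr) (u : Str) : splitS T u ⊆ T := by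
  induction u generalizing T with
  | nil => exact subset_rfl
  | cons i v ih => exact (ih _).trans (restr_subset _ _)

section LargeTree

variable {r : Str} {q : ℕ → Bool → Str}

lemma mem_largeTree_iff {t : Str} : t ∈ largeTree r q ↔ ∃ n f, t <+: r ++ blocks q f n :=
  ⟨fun ⟨n, f, h⟩ => ⟨n+1, f, h⟩, fun ⟨n, f, h⟩ =>
    ⟨n, f, h.trans ((List.prefix_append_right_inj r).2 (blocks_prefix_blocks f n.le_succ))⟩⟩

lemma mem_largeTree_of_prefix {t t' : Str} (ht : t ∈ largeTree r q) (h : t' <+: t) :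
    t' ∈ largeTree r q :=
  let ⟨n, f, hn⟩ := ht
  ⟨n, f, h.trans hn⟩

lemma append_blocks_mem_largeTree (f : ℕ → Bool) (n : ℕ) : r ++ blocks q f n ∈ largeTree r q :=
  mem_largeTree_iff.2 ⟨n, f, List.prefix_refl _⟩

lemma root_mem_largeTree : r ∈ largeTree r q := by
  simpa using append_blocks_mem_largeTree (r := r) (q := q) (fun _ => false) 0

lemma comparable_of_mem_largeTree {t : Str} (ht : t ∈ largeTree r q) : t <+: r ∨ r <+: t :=
  let ⟨_, _, hn⟩ := ht
  List.prefix_or_prefix_of_prefix hn (List.prefix_append _ _)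

lemma prefix_of_append_singleton_mem {x : Str} (h0 : x ++ [false] ∈ largeTree r q)
    (h1 : x ++ [true] ∈ largeTree r q) : r <+: x := by
  by_contra hrx
  have hpre : ∀ b, x ++ [b] ∈ largeTree r q → x ++ [b] <+: r := fun b hb =>
    (comparable_of_mem_largeTree hb).elim id fun h =>
      (List.prefix_concat_iff.1 h).elim (fun h => h ▸ List.prefix_refl r) (absurd · hrx)
  exact Bool.false_ne_true (eq_of_append_singleton_prefix (hpre _ h0) (hpre _ h1))

lemma actT_largeTree {μ : Str} (hμ : μ.length ≤ r.length) :
    actT μ (largeTree r q) = largeTree (act μ r) q := by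
  ext x
  constructor
  · rintro ⟨y, ⟨n, f, hy⟩, rfl⟩
    exact ⟨n, f, by simpa [act_append _ hμ] using act_prefix μ hy⟩
  · rintro ⟨n, f, hx⟩
    refine ⟨act μ x, ⟨n, f, ?_⟩, act_act μ x⟩
    have h := act_prefix μ hx
    rwa [act_append _ (by simpa using hμ), act_act] at h

namespace IsBlocks

variable (hq : IsBlocks q)
include hq

lemma append_singleton_mem_largeTree (i : Bool) : r ++ [i] ∈ largeTree r q := by
  refine mem_largeTree_of_prefix (append_blocks_mem_largeTree (fun _ => i) 1) ?_
  simpa [blocks_succ] using hq.singleton_prefix 0 i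

lemma prefix_of_restr_eq {s : Str} (hs : s ∈ largeTree r q)
    (h : restr (largeTree r q) s = largeTree r q) : s <+: r := by
  by_contra hsr
  have hrs := (comparable_of_mem_largeTree hs).resolve_left hsr
  have hlen : r.length < s.length :=
    lt_of_le_of_ne hrs.length_le fun he => hsr (by rw [hrs.eq_of_length he])
  have hpre : ∀ b, r ++ [b] <+: s := fun b => by
    have hb : r ++ [b] ∈ restr (largeTree r q) s := by
      rw [h]; exact hq.append_singleton_mem_largeTree b
    exact prefix_of_comparable hb.2.symm (by simpa using hlen)
  exact Bool.false_ne_true (eq_of_append_singleton_prefix (hpre false) (hpre true))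

lemma stem_largeTree : stem (largeTree r q) = r :=
  stem_eq root_mem_largeTree
    (Set.sep_eq_self_iff_mem_true.2 fun _ ht => (comparable_of_mem_largeTree ht).symm)
    fun _ => hq.prefix_of_restr_eq

lemma split1_largeTree (i : Bool) :
    split1 (largeTree r q) i = largeTree (r ++ q 0 i) (fun k => q (k+1)) := by
  have hri : r ++ [i] <+: r ++ q 0 i := (List.prefix_append_right_inj r).2 (hq.singleton_prefix 0 i)
  rw [split1, hq.stem_largeTree]
  ext x
  constructor
  · rintro ⟨⟨n, f, hx⟩, hcomp⟩
    rw [blocks_succ', ← List.append_assoc] at hx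
    rcases hcomp with h | h
    · have hf : f 0 = i := eq_of_append_singleton_prefix
        (((List.prefix_append_right_inj r).2 (hq.singleton_prefix 0 (f 0))).trans
          (List.prefix_append _ _)) (h.trans hx)
      rw [hf] at hx
      exact mem_largeTree_iff.2 ⟨n, _, hx⟩
    · exact mem_largeTree_of_prefix root_mem_largeTree (h.trans hri)
  · rintro ⟨n, f, hx⟩
    have hx' : x <+: r ++ blocks q (fun k => k.casesOn i f) (n+2) := by
      rwa [blocks_succ', ← List.append_assoc]
    exact ⟨⟨n+1, _, hx'⟩, (List.prefix_or_prefix_of_prefix (hri.trans (List.prefix_append _ _)) hx)⟩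

lemma splitS_largeTree (u : Str) :
    splitS (largeTree r q) u = largeTree (r ++ blocksAlong q u) (fun k => q (k + u.length)) := by
  induction u generalizing r q with
  | nil => simp [splitS, blocksAlong]
  | cons i v ih =>
    rw [splitS_cons, hq.split1_largeTree, ih (hq.shift 1), blocksAlong_cons, List.append_assoc]
    simp only [List.length_cons, Nat.add_assoc]

lemma stem_splitS_largeTree (u : Str) :
    stem (splitS (largeTree r q) u) = r ++ blocksAlong q u := by
  rw [hq.splitS_largeTree, (hq.shift _).stem_largeTree]

lemma spl_largeTree (k : ℕ) : spl (largeTree r q) k = splN r q k := by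
  -- `splN r q k` is read off the tree, as the length of the stem of `T→0^k`.
  have hsplN : ∀ {r' q'}, IsBlocks q' →
      splN r' q' k = (stem (splitS (largeTree r' q') (List.replicate k false))).length :=
    fun hq' => by
      rw [hq'.stem_splitS_largeTree, hq'.length_append_blocksAlong, List.length_replicate]
  have hex : ∃ w : Str × (ℕ → Bool → Str), LTwit (largeTree r q) w.1 w.2 :=
    ⟨(r, q), ltwit_iff.2 ⟨hq, rfl⟩⟩
  obtain ⟨hw, heq⟩ := ltwit_iff.1 (Classical.epsilon_spec hex)
  rw [spl, witness, hsplN hw, ← heq, ← hsplN hq]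

lemma exists_mem_splitS {x : Str} (hx : x ∈ largeTree r q) (m : ℕ) :
    ∃ u : Str, u.length = m ∧ x ∈ splitS (largeTree r q) u := by
  obtain ⟨n, g, hx⟩ := hx
  refine ⟨List.ofFn fun k : Fin m => g k, List.length_ofFn, ?_⟩
  rw [hq.splitS_largeTree, blocksAlong_ofFn, List.length_ofFn]
  refine mem_largeTree_iff.2 ⟨n+1, fun k => g (k + m), ?_⟩
  rw [List.append_assoc, ← blocks_add, Nat.add_comm]
  exact hx.trans ((List.prefix_append_right_inj r).2 (blocks_prefix_blocks g (by omega)))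

lemma splitS_largeTree_eq_actT {u v : Str} (h : u.length = v.length) :
    splitS (largeTree r q) v =
      actT (act (r ++ blocksAlong q v) (r ++ blocksAlong q u)) (splitS (largeTree r q) u) := by
  have hlen : (r ++ blocksAlong q v).length = (r ++ blocksAlong q u).length := by
    rw [hq.length_append_blocksAlong, hq.length_append_blocksAlong, h]
  rw [hq.splitS_largeTree, hq.splitS_largeTree, actT_largeTree (by simp),
    act_act_cancel hlen, h]

end IsBlocks

end LargeTree

lemma prefix_of_largeTree_subset {r r' : Str} {q q' : ℕ → Bool → Str} (hq' : IsBlocks q')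
    (h : largeTree r' q' ⊆ largeTree r q) : r <+: r' :=
  prefix_of_append_singleton_mem (h (hq'.append_singleton_mem_largeTree false))
    (h (hq'.append_singleton_mem_largeTree true))

lemma splitS_mem {P' : Set Tr} (hP' : IsLTF P') {T : Tr} (hT : T ∈ P') (u : Str) :
    splitS T u ∈ P' := by
  induction u generalizing T with
  | nil => exact hT
  | cons i v ih =>
    obtain ⟨r, q, hq, rfl⟩ := isLT_iff.1 (hP'.1 T hT)
    refine ih ?_
    rw [split1, hq.stem_largeTree]
    exact hP'.2.1 _ hT _ (hq.append_singleton_mem_largeTree i)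

lemma exists_largeTree_subset_le_length_stem {P' : Set Tr} (hP' : IsLTF P') {S : Tr}
    (hS : S ∈ P') (m : ℕ) :
    ∃ r q, IsBlocks q ∧ m ≤ r.length ∧ largeTree r q ∈ P' ∧ largeTree r q ⊆ S := by
  obtain ⟨rS, qS, hqS, rfl⟩ := isLT_iff.1 (hP'.1 S hS)
  have hsplit := hqS.splitS_largeTree (r := rS) (List.replicate m false)
  refine ⟨_, _, hqS.shift _, ?_, hsplit ▸ splitS_mem hP' hS _, hsplit ▸ splitS_subset _ _⟩
  simpa [hqS.length_append_blocksAlong] using hqS.le_splN rS m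

def graftBlocks (q : ℕ → Bool → Str) (n : ℕ) (tail : Bool → Str) (q' : ℕ → Bool → Str) :
    ℕ → Bool → Str :=
  fun k i => if k < n then q k i else if k = n then q n i ++ tail i else q' (k - (n+1)) i

section Graft

variable {q q' : ℕ → Bool → Str} {n : ℕ} {tail : Bool → Str}

lemma graftBlocks_of_lt {k : ℕ} (hk : k < n) : graftBlocks q n tail q' k = q k :=
  funext fun _ => if_pos hk

lemma graftBlocks_self (i : Bool) : graftBlocks q n tail q' n i = q n i ++ tail i := by
  simp [graftBlocks]

lemma graftBlocks_add (k : ℕ) : graftBlocks q n tail q' (k + (n+1)) = q' k :=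
  funext fun _ => by simp [graftBlocks, show ¬ k + (n+1) < n by omega, show k + (n+1) ≠ n by omega]

lemma isBlocks_graftBlocks (hq : IsBlocks q) (hq' : IsBlocks q')
    (htail : (tail true).length = (tail false).length) : IsBlocks (graftBlocks q n tail q') := by
  refine ⟨fun k => ?_, fun k i => ?_⟩ <;> rcases lt_trichotomy k n with hk | rfl | hk
  · rw [graftBlocks_of_lt hk]; exact hq.1 k
  · simp only [graftBlocks_self, List.length_append, (hq.1 k).1, htail, true_and]
    have := (hq.1 k).2
    omega
  · obtain ⟨k, rfl⟩ := Nat.exists_eq_add_of_lt hk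
    rw [show n + k + 1 = k + (n+1) by omega, graftBlocks_add]; exact hq'.1 k
  · rw [graftBlocks_of_lt hk]; exact hq.2 k i
  · rw [graftBlocks_self, List.head?_append, hq.2 k i]; rfl
  · obtain ⟨k, rfl⟩ := Nat.exists_eq_add_of_lt hk
    rw [show n + k + 1 = k + (n+1) by omega, graftBlocks_add]; exact hq'.2 k i

lemma splN_graftBlocks (r : Str) {k : ℕ} (hk : k ≤ n) :
    splN r (graftBlocks q n tail q') k = splN r q k := by
  induction k with
  | zero => rfl
  | succ k ih => rw [splN, splN, ih (by omega), graftBlocks_of_lt (by omega)]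

lemma blocksAlong_graftBlocks {v : Str} (hv : v.length = n) (i : Bool) :
    blocksAlong (graftBlocks q n tail q') (v ++ [i]) = blocksAlong q (v ++ [i]) ++ tail i := by
  rw [blocksAlong_append_singleton, blocksAlong_append_singleton, hv, graftBlocks_self,
    blocksAlong_congr fun k hk => graftBlocks_of_lt (hv ▸ hk), List.append_assoc]

lemma IsBlocks.splitS_largeTree_graftBlocks (hq : IsBlocks (graftBlocks q n tail q'))
    {r v : Str} (hv : v.length = n) (i : Bool) :
    splitS (largeTree r (graftBlocks q n tail q')) (v ++ [i]) =
      largeTree (r ++ blocksAlong q (v ++ [i]) ++ tail i) q' := by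
  rw [hq.splitS_largeTree, blocksAlong_graftBlocks hv, List.length_append, hv,
    List.length_singleton, List.append_assoc]
  simp only [graftBlocks_add]

end Graft

lemma exists_collage_graft {P' : Set Tr} (hP' : IsLTF P') {n : ℕ} {r : Str}
    {q q' : ℕ → Bool → Str} (hq : IsBlocks q) (hq' : IsBlocks q') {base tail : Bool → Str}
    (hbase : ∀ i, (base i).length = n) (htail : (tail true).length = (tail false).length)
    (hmem : ∀ i, largeTree (r ++ blocksAlong q (base i ++ [i]) ++ tail i) q' ∈ P')
    (hsub : ∀ i, largeTree (r ++ blocksAlong q (base i ++ [i]) ++ tail i) q' ⊆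
      splitS (largeTree r q) (base i ++ [i])) :
    ∃ Q : Tr, IsCollage P' (n+1) Q ∧ subN (n+1) Q (largeTree r q) ∧
      ∀ i, splitS Q (base i ++ [i]) =
        largeTree (r ++ blocksAlong q (base i ++ [i]) ++ tail i) q' := by
  have hqQ := isBlocks_graftBlocks (n := n) hq hq' htail
  have hsplit := fun {v : Str} (hv : v.length = n) i =>
    hqQ.splitS_largeTree_graftBlocks (r := r) hv i
  have hlen : ∀ {v : Str} i, v.length = n →
      (r ++ blocksAlong q (v ++ [i])).length = splN r q (n+1) :=
    fun i hv => by rw [hq.length_append_blocksAlong]; simp [hv]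
  have hcell : ∀ v i, v.length = n →
      splitS (largeTree r (graftBlocks q n tail q')) (v ++ [i]) ∈ P' ∧
      splitS (largeTree r (graftBlocks q n tail q')) (v ++ [i]) ⊆
        splitS (largeTree r q) (v ++ [i]) := by
    intro v i hv
    set μ := act (r ++ blocksAlong q (v ++ [i])) (r ++ blocksAlong q (base i ++ [i]))
    have hμ : μ.length ≤ (r ++ blocksAlong q (base i ++ [i])).length := by simp [μ]
    have hQ : splitS (largeTree r (graftBlocks q n tail q')) (v ++ [i]) =
        actT μ (largeTree (r ++ blocksAlong q (base i ++ [i]) ++ tail i) q') := by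
      rw [hsplit hv, actT_largeTree (hμ.trans (by simp)), act_append _ hμ,
        act_act_cancel (by rw [hlen i hv, hlen i (hbase i)])]
    rw [hQ, hq.splitS_largeTree_eq_actT (u := base i ++ [i]) (by simp [hv, hbase])]
    exact ⟨hP'.2.2 _ (hmem i) μ, Set.image_mono (hsub i)⟩
  refine ⟨largeTree r (graftBlocks q n tail q'), ⟨⟨r, _, ltwit_iff.2 ⟨hqQ, rfl⟩⟩, ?_⟩,
    ⟨fun x hx => ?_, fun k hk => ?_⟩, fun i => hsplit (hbase i) i⟩
  · intro u hu
    obtain ⟨v, i, hv, rfl⟩ := exists_eq_append_singleton hu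
    exact (hcell v i hv).1
  · obtain ⟨u, hu, hxu⟩ := hqQ.exists_mem_splitS hx (n+1)
    obtain ⟨v, i, hv, rfl⟩ := exists_eq_append_singleton hu
    exact splitS_subset _ _ ((hcell v i hv).2 hxu)
  · rw [hqQ.spl_largeTree, hq.spl_largeTree, splN_graftBlocks r (by omega)]

lemma exists_collage_of_subset_splitS {P' : Set Tr} (hP' : IsLTF P') {n : ℕ} {rP r σ : Str}
    {qP q : ℕ → Bool → Str} (hqP : IsBlocks qP) (hq : IsBlocks q) (hσ : σ.length ≤ r.length)
    (hmem : largeTree r q ∈ P') {s t : Str} (hs : s.length = n) (ht : t.length = n)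
    (hsub0 : largeTree r q ⊆ splitS (largeTree rP qP) (s ++ [false]))
    (hsub1 : actT σ (largeTree r q) ⊆ splitS (largeTree rP qP) (t ++ [true])) :
    ∃ Q : Tr, IsCollage P' (n+1) Q ∧ subN (n+1) Q (largeTree rP qP) ∧
      splitS Q (s ++ [false]) = largeTree r q ∧
        splitS Q (t ++ [true]) = actT σ (largeTree r q) := by
  rw [actT_largeTree hσ] at hsub1 ⊢
  obtain ⟨tail0, h0⟩ := prefix_of_largeTree_subset hq (hqP.splitS_largeTree _ ▸ hsub0)
  obtain ⟨tail1, h1⟩ := prefix_of_largeTree_subset hq (hqP.splitS_largeTree _ ▸ hsub1)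
  have htail : tail1.length = tail0.length := by
    have e0 := congrArg List.length h0
    have e1 := congrArg List.length h1
    simp only [List.length_append, hqP.length_append_blocksAlong, length_act,
      List.length_singleton, hs, ht] at e0 e1
    omega
  obtain ⟨Q, hQ, hQP, hQsplit⟩ := exists_collage_graft hP' hqP hq
    (base := fun i => cond i t s) (tail := fun i => cond i tail1 tail0)
    (Bool.forall_bool.2 ⟨hs, ht⟩) htail
    (Bool.forall_bool.2 ⟨h0 ▸ hmem, h1 ▸ actT_largeTree hσ ▸ hP'.2.2 _ hmem σ⟩)
    (Bool.forall_bool.2 ⟨h0 ▸ hsub0, h1 ▸ hsub1⟩)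
  obtain ⟨hQ0, hQ1⟩ := Bool.forall_bool.1 hQsplit
  simp only [cond_false, cond_true, h0, h1] at hQ0 hQ1
  exact ⟨Q, hQ, hQP, hQ0, hQ1⟩

theorem stmt15_general (P' : Set Tr) (hP' : IsLTF P') (n : ℕ) (P : Tr) (hP : IsCollage P' n P)
    (S T : Tr) (hS : S ∈ P')
    (s t : Str) (hs : s.length = n) (ht : t.length = n)
    (hS0 : S ⊆ splitS P (s ++ [false])) (hT1 : T ⊆ splitS P (t ++ [true]))
    (σ : Str) (hσ : T = actT σ S) :
    ∃ Q : Tr, IsCollage P' (n+1) Q ∧ subN (n+1) Q P ∧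
      splitS Q (s ++ [false]) ⊆ S ∧ splitS Q (t ++ [true]) ⊆ T := by
  subst hσ
  obtain ⟨rP, qP, hqP, rfl⟩ := isLT_iff.1 hP.1
  obtain ⟨r, q, hq, hσr, hmem, hsubS⟩ := exists_largeTree_subset_le_length_stem hP' hS σ.length
  obtain ⟨Q, hQ, hQP, hQ0, hQ1⟩ := exists_collage_of_subset_splitS hP' hqP hq hσr hmem hs ht
    (hsubS.trans hS0) ((Set.image_mono hsubS).trans hT1)
  exact ⟨Q, hQ, hQP, hQ0 ▸ hsubS, hQ1 ▸ Set.image_mono hsubS⟩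

/-- Lemma `stf`(3): let `P'` be a large-tree forcing notion, `P` an
`n`-collage over `P'`, `S, T ∈ P'`, `s, t ∈ 2^n`, `S ⊆ P→(s⌢0)`, `T ⊆ P→(t⌢1)`, and
`T = σ·S`. Then there is an `(n+1)`-collage `Q` over `P'` with `Q ⊆_{n+1} P`,
`Q→(s⌢0) ⊆ S`, and `Q→(t⌢1) ⊆ T`. -/
theorem stmt15 (P' : Set Tr) (hP' : IsLTF P') (n : ℕ) (P : Tr) (hP : IsCollage P' n P)
    (S T : Tr) (hS : S ∈ P') (hT : T ∈ P')
    (s t : Str) (hs : s.length = n) (ht : t.length = n)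
    (hS0 : S ⊆ splitS P (s ++ [false])) (hT1 : T ⊆ splitS P (t ++ [true]))
    (σ : Str) (hσ : T = actT σ S) :
    ∃ Q : Tr, IsCollage P' (n+1) Q ∧ subN (n+1) Q P ∧
      splitS Q (s ++ [false]) ⊆ S ∧ splitS Q (t ++ [true]) ⊆ T :=
  stmt15_general P' hP' n P hP S T hS s t hs ht hS0 hT1 σ hσ

end E0L
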